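/- Convergence in BV norm of integrators: if α_k ∈ BV[a,b], α_k → α in the BV norm ‖β‖_BV = sup_{x∈[a,b]}|β(x)| + Vβ(b), and a bounded f is RDS integrable with respect to each α_k, then f is RDS integrable with respect to α and lim_{k→∞} ∫_a^b f dα_k = ∫_a^b f dα. -/

import Mathlib

open Set Filter Topology
open scoped Classical

noncomputable section

/-- A partition `a = x 0 < x 1 < ... < x n = b` of `[a,b]`. -/
structure RDSPartition (a b : ℝ) where
  n : ℕ
  x : ℕ → ℝ
  mono : ∀ i, i < n → x i < x (i + 1)
  first : x 0 = a
  last : x n = b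

/-- Right limit `α(t+)`, with the convention `α(b+) = α(b)` at the right endpoint. -/
def rLim (b : ℝ) (α : ℝ → ℝ) (t : ℝ) : ℝ :=
  if t < b then Function.rightLim α t else α t

/-- Left limit `α(t-)`, with the convention `α(a-) = α(a)` at the left endpoint. -/
def lLim (a : ℝ) (α : ℝ → ℝ) (t : ℝ) : ℝ :=
  if a < t then Function.leftLim α t else α t

/-- `α`-length of the singleton `{t}` inside `[a,b]`: `α(t+) - α(t-)`. -/
def muPt (a b : ℝ) (α : ℝ → ℝ) (t : ℝ) : ℝ :=
  rLim b α t - lLim a α t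

/-- `α`-length of the open interval `(c,d)` inside `[a,b]`: `α(d-) - α(c+)`. -/
def muIoo (a b : ℝ) (α : ℝ → ℝ) (c d : ℝ) : ℝ :=
  lLim a α d - rLim b α c

/-- `f` is a step function with respect to the partition `P`: it is constant on each
open subinterval `(x (i-1), x i)` of `P`. -/
def IsStepOn (a b : ℝ) (f : ℝ → ℝ) (P : RDSPartition a b) : Prop :=
  ∀ i, i < P.n → ∀ s ∈ Set.Ioo (P.x i) (P.x (i + 1)),
    f s = f ((P.x i + P.x (i + 1)) / 2)

/-- The RDS integral of a step function with respect to the partition `P`: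
`Σ_{i=0}^n f(x_i) μ_α({x_i}) + Σ_{i=1}^n c_i μ_α(I_i)`. -/
def stepInt (a b : ℝ) (α : ℝ → ℝ) (P : RDSPartition a b) (f : ℝ → ℝ) : ℝ :=
  (∑ i ∈ Finset.range (P.n + 1), f (P.x i) * muPt a b α (P.x i)) +
    ∑ i ∈ Finset.range P.n,
      f ((P.x i + P.x (i + 1)) / 2) * muIoo a b α (P.x i) (P.x (i + 1))

/-- Upper envelope: infimum of RDS step integrals of step functions above `f` on `[a,b]`. -/
def upperRDS (a b : ℝ) (α f : ℝ → ℝ) : ℝ :=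
  sInf { r | ∃ (u : ℝ → ℝ) (P : RDSPartition a b), IsStepOn a b u P ∧
    (∀ t ∈ Set.Icc a b, f t ≤ u t) ∧ r = stepInt a b α P u }

/-- Lower envelope: supremum of RDS step integrals of step functions below `f` on `[a,b]`. -/
def lowerRDS (a b : ℝ) (α f : ℝ → ℝ) : ℝ :=
  sSup { r | ∃ (v : ℝ → ℝ) (P : RDSPartition a b), IsStepOn a b v P ∧
    (∀ t ∈ Set.Icc a b, v t ≤ f t) ∧ r = stepInt a b α P v }

/-- RDS integrability with respect to an increasing integrator. -/
def RDSIntegrableInc (a b : ℝ) (α f : ℝ → ℝ) : Prop :=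
  lowerRDS a b α f = upperRDS a b α f

/-- The RDS integral with respect to an increasing integrator. -/
def RDSIntegralInc (a b : ℝ) (α f : ℝ → ℝ) : ℝ := upperRDS a b α f

/-- RDS integrability with respect to a BV integrator: some Jordan decomposition
into increasing functions works. -/
def RDSIntegrable (a b : ℝ) (α f : ℝ → ℝ) : Prop :=
  ∃ αp αm : ℝ → ℝ, MonotoneOn αp (Set.Icc a b) ∧ MonotoneOn αm (Set.Icc a b) ∧
    (∀ t ∈ Set.Icc a b, α t = αp t - αm t) ∧
    RDSIntegrableInc a b αp f ∧ RDSIntegrableInc a b αm f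

/-- The RDS integral with respect to a BV integrator. -/
def RDSIntegral (a b : ℝ) (α f : ℝ → ℝ) : ℝ :=
  if h : RDSIntegrable a b α f then
    RDSIntegralInc a b h.choose f - RDSIntegralInc a b h.choose_spec.choose f
  else 0

/-- `f` is bounded on `[a,b]`. -/
def BddOn (a b : ℝ) (f : ℝ → ℝ) : Prop :=
  ∃ M : ℝ, ∀ t ∈ Set.Icc a b, |f t| ≤ M

end


/-- The BV norm on `[a,b]`: `sup_{[a,b]} |β| + Vβ(b)`. -/
noncomputable def BVnorm (a b : ℝ) (β : ℝ → ℝ) : ℝ :=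
  sSup ((fun t => |β t|) '' Set.Icc a b) + (eVariationOn β (Set.Icc a b)).toReal

/-!
For an increasing integrator `g`, the oscillation `oscRDS` (upper minus lower envelope) is
subadditive in `g`, monotone for the order `g ≼ h` ("`h - g` is increasing"), and at most
`2 M (g b - g a)`; all of this comes from identifying step integrals with Lebesgue–Stieltjes
integrals. If `β = P - Q` with `P, Q` increasing, the running variation `vβ` satisfies
`vβ ≼ P + Q` and `vβ - β ≼ Q + Q`, so `f` is integrable for `β` iff it is for the canonical pair
`vβ, vβ - β`. Writing `α = A_k - δ_k` and splitting `δ_k` canonically bounds the oscillations of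
the canonical pair of `α` by `O(M · Vδ_k) → 0`, which gives integrability; linearity of the
integral in the integrator and `|∫ f dδ| ≤ 3 M Vδ` then give the convergence.
-/

open Set Filter Topology Function MeasureTheory

noncomputable section

namespace RDSPartition

variable {a b : ℝ} (P : RDSPartition a b)

lemma strictMonoOn_x : StrictMonoOn P.x (Iic P.n) :=
  strictMonoOn_Iic_of_lt_succ fun i hi => by simpa [Order.succ_eq_add_one] using P.mono i hi

lemma x_lt_x_iff {i j : ℕ} (hi : i ≤ P.n) (hj : j ≤ P.n) : P.x i < P.x j ↔ i < j :=
  P.strictMonoOn_x.lt_iff_lt hi hj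

lemma x_mem_Icc {i : ℕ} (hi : i ≤ P.n) : P.x i ∈ Icc a b := by
  have hmono := P.strictMonoOn_x.monotoneOn
  constructor
  · simpa only [P.first] using hmono (Nat.zero_le P.n) hi (Nat.zero_le i)
  · simpa only [P.last] using hmono hi (mem_Iic.2 le_rfl) hi

lemma exists_cell {c : ℝ} (hc : c ∈ Ico a b) :
    ∃ i < P.n, P.x i ≤ c ∧ c < P.x (i + 1) := by
  have hcn : c < P.x P.n := by rw [P.last]; exact hc.2
  have hex : ∃ j, c < P.x j := ⟨P.n, hcn⟩
  have hj0 : Nat.find hex ≠ 0 := fun h => by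
    have := Nat.find_spec hex
    rw [h, P.first] at this
    exact not_le.2 this hc.1
  have hjn : Nat.find hex ≤ P.n := Nat.find_min' hex hcn
  refine ⟨Nat.find hex - 1, by omega, not_lt.1 (Nat.find_min hex (by omega)), ?_⟩
  rw [Nat.sub_add_cancel (Nat.one_le_iff_ne_zero.2 hj0)]
  exact Nat.find_spec hex

lemma x_notMem_cell {i j : ℕ} (hi : i ≤ P.n) (hj : j < P.n) :
    P.x i ∉ Ioo (P.x j) (P.x (j + 1)) := fun h => by
  have h1 := (P.x_lt_x_iff hj.le hi).1 h.1
  have h2 := (P.x_lt_x_iff hi hj).1 h.2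
  omega

lemma eq_of_mem_cell {i j : ℕ} (hi : i < P.n) (hj : j < P.n) {t : ℝ}
    (hti : t ∈ Ioo (P.x i) (P.x (i + 1))) (htj : t ∈ Ioo (P.x j) (P.x (j + 1))) : i = j := by
  have h1 := (P.x_lt_x_iff hi.le hj).1 (hti.1.trans htj.2)
  have h2 := (P.x_lt_x_iff hj.le hi).1 (htj.1.trans hti.2)
  omega

lemma eq_x_or_mem_cell {t : ℝ} (ht : t ∈ Icc a b) :
    (∃ i ≤ P.n, P.x i = t) ∨ ∃ i < P.n, t ∈ Ioo (P.x i) (P.x (i + 1)) := by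
  rcases ht.2.eq_or_lt with rfl | htb
  · exact Or.inl ⟨P.n, le_rfl, P.last⟩
  obtain ⟨i, hi, hxt, htx⟩ := P.exists_cell ⟨ht.1, htb⟩
  rcases hxt.eq_or_lt with h | h
  · exact Or.inl ⟨i, hi.le, h⟩
  · exact Or.inr ⟨i, hi, h, htx⟩

lemma exists_Ioo_subset_cell {c d : ℝ} (hc : a ≤ c) (hcd : c < d) (hd : d ≤ b)
    (h : ∀ i ≤ P.n, P.x i ∉ Ioo c d) : ∃ i < P.n, Ioo c d ⊆ Ioo (P.x i) (P.x (i + 1)) := by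
  obtain ⟨i, hi, hxc, hcx⟩ := P.exists_cell ⟨hc, hcd.trans_le hd⟩
  exact ⟨i, hi, Ioo_subset_Ioo hxc (not_lt.1 fun hdx => h (i + 1) hi ⟨hcx, hdx⟩)⟩

def points : Finset ℝ := (Finset.range (P.n + 1)).image P.x

lemma mem_points {t : ℝ} : t ∈ P.points ↔ ∃ i ≤ P.n, P.x i = t := by
  simp [points]

def ofFinset (S : Finset ℝ) (hS : ∀ t ∈ S, t ∈ Icc a b) (ha : a ∈ S) (hb : b ∈ S) :
    RDSPartition a b where
  n := S.card - 1
  x i := if h : i < S.card then S.orderEmbOfFin rfl ⟨i, h⟩ else b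
  mono i hi := by
    rw [dif_pos (by omega), dif_pos (by omega)]
    exact (S.orderEmbOfFin rfl).strictMono (Fin.mk_lt_mk.2 (Nat.lt_succ_self i))
  first := by
    have hS0 : 0 < S.card := Finset.card_pos.2 ⟨a, ha⟩
    rw [dif_pos hS0, Finset.orderEmbOfFin_zero rfl hS0]
    exact le_antisymm (S.min'_le a ha) (S.le_min' _ a fun t ht => (hS t ht).1)
  last := by
    have hS0 : 0 < S.card := Finset.card_pos.2 ⟨a, ha⟩
    rw [dif_pos (by omega), Finset.orderEmbOfFin_last rfl hS0]
    exact le_antisymm (S.max'_le _ b fun t ht => (hS t ht).2) (S.le_max' b hb)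

lemma subset_points_ofFinset (S : Finset ℝ) (hS : ∀ t ∈ S, t ∈ Icc a b) (ha : a ∈ S)
    (hb : b ∈ S) : S ⊆ (ofFinset S hS ha hb).points := by
  intro t ht
  obtain ⟨⟨i, hi⟩, rfl⟩ : t ∈ Set.range (S.orderEmbOfFin rfl) := by
    rwa [Finset.range_orderEmbOfFin]
  exact (mem_points _).2 ⟨i, by simp only [ofFinset]; omega, by simp [ofFinset, hi]⟩

lemma exists_refinement (P Q : RDSPartition a b) :
    ∃ R : RDSPartition a b, P.points ⊆ R.points ∧ Q.points ⊆ R.points := by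
  have hS : ∀ t ∈ P.points ∪ Q.points, t ∈ Icc a b := by
    simp only [Finset.mem_union, mem_points]
    rintro t (⟨i, hi, rfl⟩ | ⟨i, hi, rfl⟩)
    exacts [P.x_mem_Icc hi, Q.x_mem_Icc hi]
  have ha : a ∈ P.points ∪ Q.points :=
    Finset.mem_union_left _ ((mem_points _).2 ⟨0, Nat.zero_le _, P.first⟩)
  have hb : b ∈ P.points ∪ Q.points :=
    Finset.mem_union_left _ ((mem_points _).2 ⟨P.n, le_rfl, P.last⟩)
  exact ⟨ofFinset _ hS ha hb, (Finset.subset_union_left).trans (subset_points_ofFinset _ _ _ _),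
    (Finset.subset_union_right).trans (subset_points_ofFinset _ _ _ _)⟩

def endpoints (hab : a < b) : RDSPartition a b where
  n := 1
  x i := if i = 0 then a else b
  mono i hi := by
    obtain rfl : i = 0 := by omega
    simpa using hab
  first := rfl
  last := rfl

end RDSPartition

section StepFunctions

variable {a b : ℝ} {u v : ℝ → ℝ} {P : RDSPartition a b}

lemma IsStepOn.of_points_subset {R : RDSPartition a b} (hu : IsStepOn a b u P)
    (hPR : P.points ⊆ R.points) : IsStepOn a b u R := by
  intro j hj s hs
  have hnot : ∀ i ≤ P.n, P.x i ∉ Ioo (R.x j) (R.x (j + 1)) := fun i hi hmem => by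
    obtain ⟨k, hk, hxk⟩ := R.mem_points.1 (hPR (P.mem_points.2 ⟨i, hi, rfl⟩))
    exact R.x_notMem_cell hk hj (hxk ▸ hmem)
  have hjR := R.mono j hj
  obtain ⟨i, hi, hsub⟩ := P.exists_Ioo_subset_cell (R.x_mem_Icc hj.le).1 hjR
    (R.x_mem_Icc hj).2 hnot
  rw [hu i hi s (hsub hs)]
  exact (hu i hi _ (hsub ⟨by linarith, by linarith⟩)).symm

lemma IsStepOn.neg (hu : IsStepOn a b u P) : IsStepOn a b (fun t => -u t) P :=
  fun i hi s hs => by simp only [hu i hi s hs]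

lemma IsStepOn.const (hab : a < b) (c : ℝ) :
    IsStepOn a b (fun _ => c) (RDSPartition.endpoints hab) :=
  fun _ _ _ _ => rfl

lemma IsStepOn.exists_isStepOn_min {Q : RDSPartition a b} (hu : IsStepOn a b u P)
    (hv : IsStepOn a b v Q) :
    ∃ R : RDSPartition a b, IsStepOn a b (fun t => min (u t) (v t)) R := by
  obtain ⟨R, hPR, hQR⟩ := P.exists_refinement Q
  have huR := hu.of_points_subset hPR
  have hvR := hv.of_points_subset hQR
  exact ⟨R, fun i hi s hs => by simp only [huR i hi s hs, hvR i hi s hs]⟩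

end StepFunctions

section StieltjesMeasure

variable {a b : ℝ} {g h u : ℝ → ℝ}

lemma monotone_IccExtend (hab : a ≤ b) (hg : MonotoneOn g (Icc a b)) :
    Monotone (IccExtend hab fun t : Icc a b => g t) :=
  (monotoneOn_iff_monotone.1 hg).IccExtend hab

lemma rightLim_IccExtend (hab : a ≤ b) (hg : MonotoneOn g (Icc a b)) {t : ℝ}
    (ht : t ∈ Icc a b) : rightLim (IccExtend hab fun s : Icc a b => g s) t = rLim b g t := by
  have hG := monotone_IccExtend hab hg
  rcases ht.2.lt_or_eq with htb | htb
  · rw [rLim, if_pos htb]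
    have hev : (IccExtend hab fun s : Icc a b => g s) =ᶠ[𝓝[>] t] g := by
      filter_upwards [Ioo_mem_nhdsGT htb] with s hs
      exact IccExtend_of_mem _ _ ⟨ht.1.trans hs.1.le, hs.2.le⟩
    exact (rightLim_eq_of_tendsto ((hG.tendsto_rightLim t).congr' hev)).symm
  · rw [rLim, if_neg htb.not_lt]
    refine rightLim_eq_of_tendsto (tendsto_const_nhds.congr' ?_)
    filter_upwards [self_mem_nhdsWithin] with s hs
    rw [IccExtend_of_right_le hab _ (htb ▸ le_of_lt hs), htb]

lemma leftLim_IccExtend (hab : a ≤ b) (hg : MonotoneOn g (Icc a b)) {t : ℝ}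
    (ht : t ∈ Icc a b) : leftLim (IccExtend hab fun s : Icc a b => g s) t = lLim a g t := by
  have hG := monotone_IccExtend hab hg
  rcases ht.1.lt_or_eq with hat | hat
  · rw [lLim, if_pos hat]
    have hev : (IccExtend hab fun s : Icc a b => g s) =ᶠ[𝓝[<] t] g := by
      filter_upwards [Ioo_mem_nhdsLT hat] with s hs
      exact IccExtend_of_mem _ _ ⟨hs.1.le, hs.2.le.trans ht.2⟩
    exact (leftLim_eq_of_tendsto ((hG.tendsto_leftLim t).congr' hev)).symm
  · rw [lLim, if_neg hat.not_lt]
    refine leftLim_eq_of_tendsto (tendsto_const_nhds.congr' ?_)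
    filter_upwards [self_mem_nhdsWithin] with s hs
    rw [IccExtend_of_le_left hab _ (hat ▸ le_of_lt hs), ← hat]

/-- Extending `g` by constants outside `[a,b]` makes the masses of points and of open intervals
in `[a,b]` equal to `muPt` and `muIoo`, endpoint conventions included. -/
def stieltjesMeasureIcc (hab : a ≤ b) (hg : MonotoneOn g (Icc a b)) : Measure ℝ :=
  (monotone_IccExtend hab hg).stieltjesFunction.measure

instance (hab : a ≤ b) (hg : MonotoneOn g (Icc a b)) :
    IsLocallyFiniteMeasure (stieltjesMeasureIcc hab hg) := by
  rw [stieltjesMeasureIcc]; infer_instance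

lemma measureReal_stieltjesMeasureIcc_singleton (hab : a ≤ b) (hg : MonotoneOn g (Icc a b))
    {t : ℝ} (ht : t ∈ Icc a b) : (stieltjesMeasureIcc hab hg).real {t} = muPt a b g t := by
  have hG := monotone_IccExtend hab hg
  rw [measureReal_def, stieltjesMeasureIcc, StieltjesFunction.measure_singleton,
    funext hG.stieltjesFunction_eq, leftLim_rightLim (hG.tendsto_leftLim t),
    ENNReal.toReal_ofReal (sub_nonneg.2 (hG.leftLim_le_rightLim le_rfl)),
    rightLim_IccExtend hab hg ht, leftLim_IccExtend hab hg ht, muPt]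

lemma measureReal_stieltjesMeasureIcc_Ioo (hab : a ≤ b) (hg : MonotoneOn g (Icc a b))
    {c d : ℝ} (hc : a ≤ c) (hcd : c < d) (hd : d ≤ b) :
    (stieltjesMeasureIcc hab hg).real (Ioo c d) = muIoo a b g c d := by
  have hG := monotone_IccExtend hab hg
  rw [measureReal_def, stieltjesMeasureIcc, StieltjesFunction.measure_Ioo,
    funext hG.stieltjesFunction_eq, leftLim_rightLim (hG.tendsto_leftLim d),
    ENNReal.toReal_ofReal (sub_nonneg.2 (hG.rightLim_le_leftLim hcd)),
    rightLim_IccExtend hab hg ⟨hc, hcd.le.trans hd⟩,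
    leftLim_IccExtend hab hg ⟨hc.trans hcd.le, hd⟩, muIoo]

lemma stieltjesMeasureIcc_add (hab : a ≤ b) (hg : MonotoneOn g (Icc a b))
    (hh : MonotoneOn h (Icc a b)) :
    stieltjesMeasureIcc (g := g + h) hab (hg.add hh) =
      stieltjesMeasureIcc hab hg + stieltjesMeasureIcc hab hh := by
  rw [stieltjesMeasureIcc, stieltjesMeasureIcc, stieltjesMeasureIcc,
    ← StieltjesFunction.measure_add]
  congr 1
  ext t
  have hG := monotone_IccExtend hab hg
  have hH := monotone_IccExtend hab hh
  rw [StieltjesFunction.add_apply, Monotone.stieltjesFunction_eq, hG.stieltjesFunction_eq,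
    hH.stieltjesFunction_eq]
  exact rightLim_eq_of_tendsto ((hG.tendsto_rightLim t).add (hH.tendsto_rightLim t))

lemma stieltjesMeasureIcc_congr {g' : ℝ → ℝ} (hab : a ≤ b) (hg : MonotoneOn g (Icc a b))
    (hg' : MonotoneOn g' (Icc a b)) (hgg' : EqOn g g' (Icc a b)) :
    stieltjesMeasureIcc hab hg = stieltjesMeasureIcc hab hg' := by
  have hext : (fun t : Icc a b => g t) = fun t : Icc a b => g' t := funext fun t => hgg' t.2
  rw [stieltjesMeasureIcc, stieltjesMeasureIcc]
  congr 1
  ext t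
  rw [Monotone.stieltjesFunction_eq, Monotone.stieltjesFunction_eq, hext]

end StieltjesMeasure

section StepIntegral

variable {a b : ℝ} {g h u v : ℝ → ℝ} {P Q : RDSPartition a b}

lemma IsStepOn.indicator_eq_sum (hu : IsStepOn a b u P) :
    (Icc a b).indicator u = fun t =>
      (∑ i ∈ Finset.range (P.n + 1), ({P.x i} : Set ℝ).indicator (fun _ => u (P.x i)) t) +
      ∑ i ∈ Finset.range P.n,
        (Ioo (P.x i) (P.x (i + 1))).indicator (fun _ => u ((P.x i + P.x (i + 1)) / 2)) t := by
  funext t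
  by_cases ht : t ∈ Icc a b
  · rw [indicator_of_mem ht]
    rcases P.eq_x_or_mem_cell ht with ⟨j, hj, rfl⟩ | ⟨j, hj, htj⟩
    · rw [Finset.sum_eq_single_of_mem j (Finset.mem_range.2 (Nat.lt_succ_of_le hj))
          fun i hi hij => indicator_of_notMem (fun h => hij (P.strictMonoOn_x.injOn
            (Nat.lt_succ_iff.1 (Finset.mem_range.1 hi)) hj (mem_singleton_iff.1 h).symm)) _,
        Finset.sum_eq_zero fun i hi =>
          indicator_of_notMem (P.x_notMem_cell hj (Finset.mem_range.1 hi)) _]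
      simp
    · rw [Finset.sum_eq_zero fun i hi => indicator_of_notMem (fun h =>
          P.x_notMem_cell (Nat.lt_succ_iff.1 (Finset.mem_range.1 hi)) hj
            (by rwa [mem_singleton_iff.1 h] at htj)) _,
        Finset.sum_eq_single_of_mem j (Finset.mem_range.2 hj) fun i hi hij =>
          indicator_of_notMem (fun h => hij (P.eq_of_mem_cell (Finset.mem_range.1 hi) hj h htj)) _,
        indicator_of_mem htj, hu j hj t htj, zero_add]
  · rw [indicator_of_notMem ht,
      Finset.sum_eq_zero fun i hi => indicator_of_notMem (fun h => ht (by
        rw [mem_singleton_iff.1 h]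
        exact P.x_mem_Icc (Nat.lt_succ_iff.1 (Finset.mem_range.1 hi)))) _,
      Finset.sum_eq_zero fun i hi => indicator_of_notMem (fun h => ht
        ⟨(P.x_mem_Icc (Finset.mem_range.1 hi).le).1.trans h.1.le,
          h.2.le.trans (P.x_mem_Icc (Finset.mem_range.1 hi)).2⟩) _, add_zero]

lemma stepInt_neg (g : ℝ → ℝ) (P : RDSPartition a b) (u : ℝ → ℝ) :
    stepInt a b g P (fun t => -u t) = -stepInt a b g P u := by
  simp only [stepInt, neg_mul, Finset.sum_neg_distrib, neg_add]

lemma stepInt_endpoints_const (hab : a < b) (g : ℝ → ℝ) (c : ℝ) :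
    stepInt a b g (RDSPartition.endpoints hab) (fun _ => c) = c * (g b - g a) := by
  simp [stepInt, RDSPartition.endpoints, muPt, muIoo, rLim, lLim, Finset.sum_range_succ, hab]
  ring

lemma integrable_indicator_const {μ : Measure ℝ} {s : Set ℝ} (hs : MeasurableSet s)
    (hμs : μ s ≠ ⊤) (c : ℝ) : Integrable (s.indicator fun _ => c) μ :=
  (integrable_indicator_iff hs).2 (integrableOn_const hμs)

variable (hab : a ≤ b) (hg : MonotoneOn g (Icc a b))
include hab hg

lemma IsStepOn.integrable_indicator (hu : IsStepOn a b u P) :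
    Integrable ((Icc a b).indicator u) (stieltjesMeasureIcc hab hg) := by
  rw [hu.indicator_eq_sum]
  exact (integrable_finsetSum _ fun i _ => integrable_indicator_const (measurableSet_singleton _)
    measure_singleton_lt_top.ne _).add
      (integrable_finsetSum _ fun i _ => integrable_indicator_const measurableSet_Ioo
        measure_Ioo_lt_top.ne _)

lemma IsStepOn.stepInt_eq_integral (hu : IsStepOn a b u P) :
    stepInt a b g P u = ∫ t, (Icc a b).indicator u t ∂(stieltjesMeasureIcc hab hg) := by
  have hpt : ∀ i ∈ Finset.range (P.n + 1), Integrable (({P.x i} : Set ℝ).indicator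
      (fun _ => u (P.x i))) (stieltjesMeasureIcc hab hg) := fun i _ =>
    integrable_indicator_const (measurableSet_singleton _) measure_singleton_lt_top.ne _
  have hcell : ∀ i ∈ Finset.range P.n, Integrable ((Ioo (P.x i) (P.x (i + 1))).indicator
      (fun _ => u ((P.x i + P.x (i + 1)) / 2))) (stieltjesMeasureIcc hab hg) := fun i _ =>
    integrable_indicator_const measurableSet_Ioo measure_Ioo_lt_top.ne _
  rw [hu.indicator_eq_sum, integral_add (integrable_finsetSum _ hpt)
    (integrable_finsetSum _ hcell), integral_finsetSum _ hpt, integral_finsetSum _ hcell, stepInt]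
  congr 1 <;> refine Finset.sum_congr rfl fun i hi => ?_
  · rw [integral_indicator_const _ (measurableSet_singleton _), smul_eq_mul, mul_comm,
      measureReal_stieltjesMeasureIcc_singleton hab hg
        (P.x_mem_Icc (Nat.lt_succ_iff.1 (Finset.mem_range.1 hi)))]
  · have hi := Finset.mem_range.1 hi
    rw [integral_indicator_const _ measurableSet_Ioo, smul_eq_mul, mul_comm,
      measureReal_stieltjesMeasureIcc_Ioo hab hg (P.x_mem_Icc hi.le).1 (P.mono i hi)
        (P.x_mem_Icc hi).2]

lemma stepInt_le_stepInt (hu : IsStepOn a b u P) (hv : IsStepOn a b v Q)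
    (hvu : ∀ t ∈ Icc a b, v t ≤ u t) : stepInt a b g Q v ≤ stepInt a b g P u := by
  rw [hu.stepInt_eq_integral hab hg, hv.stepInt_eq_integral hab hg]
  refine integral_mono (hv.integrable_indicator hab hg) (hu.integrable_indicator hab hg) fun t => ?_
  by_cases ht : t ∈ Icc a b
  · simp only [indicator_of_mem ht, hvu t ht]
  · simp only [indicator_of_notMem ht, le_refl]

lemma stepInt_add_integrator (hh : MonotoneOn h (Icc a b)) (hu : IsStepOn a b u P) :
    stepInt a b (g + h) P u = stepInt a b g P u + stepInt a b h P u := by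
  rw [hu.stepInt_eq_integral (g := g + h) hab (hg.add hh),
    stieltjesMeasureIcc_add hab hg hh, integral_add_measure (hu.integrable_indicator hab hg)
      (hu.integrable_indicator hab hh), hu.stepInt_eq_integral hab hg,
    hu.stepInt_eq_integral hab hh]

lemma stepInt_congr_integrator {g' : ℝ → ℝ} (hg' : MonotoneOn g' (Icc a b))
    (hgg' : EqOn g g' (Icc a b)) (hu : IsStepOn a b u P) :
    stepInt a b g P u = stepInt a b g' P u := by
  rw [hu.stepInt_eq_integral hab hg, hu.stepInt_eq_integral hab hg',
    stieltjesMeasureIcc_congr hab hg hg' hgg']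

end StepIntegral

def oscRDS (a b : ℝ) (g f : ℝ → ℝ) : ℝ := upperRDS a b g f - lowerRDS a b g f

section Envelopes

variable {a b M : ℝ} {g h f u u' : ℝ → ℝ} {P Q : RDSPartition a b}

lemma lowerRDS_eq_neg_upperRDS_neg (a b : ℝ) (g f : ℝ → ℝ) :
    lowerRDS a b g f = -upperRDS a b g (fun t => -f t) := by
  rw [lowerRDS, upperRDS, ← Real.sSup_neg]
  congr 1
  ext r
  rw [Set.mem_neg]
  constructor
  · rintro ⟨v, P, hv, hvf, rfl⟩
    exact ⟨fun t => -v t, P, hv.neg, fun t ht => neg_le_neg (hvf t ht), (stepInt_neg g P v).symm⟩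
  · rintro ⟨u, P, hu, hfu, hr⟩
    exact ⟨fun t => -u t, P, hu.neg, fun t ht => neg_le.1 (hfu t ht),
      by rw [stepInt_neg, ← hr, neg_neg]⟩

lemma oscRDS_eq_upperRDS_add_upperRDS_neg (a b : ℝ) (g f : ℝ → ℝ) :
    oscRDS a b g f = upperRDS a b g f + upperRDS a b g (fun t => -f t) := by
  rw [oscRDS, lowerRDS_eq_neg_upperRDS_neg, sub_neg_eq_add]

lemma rdsIntegrableInc_iff_oscRDS_eq_zero :
    RDSIntegrableInc a b g f ↔ oscRDS a b g f = 0 := by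
  rw [RDSIntegrableInc, oscRDS, sub_eq_zero, eq_comm]

lemma upperRDS_le_stepInt (hab : a < b) (hg : MonotoneOn g (Icc a b))
    (hf : ∀ t ∈ Icc a b, |f t| ≤ M) (hu : IsStepOn a b u P) (hfu : ∀ t ∈ Icc a b, f t ≤ u t) :
    upperRDS a b g f ≤ stepInt a b g P u := by
  refine csInf_le ⟨-M * (g b - g a), ?_⟩ ⟨u, P, hu, hfu, rfl⟩
  rintro _ ⟨v, Q, hv, hfv, rfl⟩
  rw [← stepInt_endpoints_const hab]
  exact stepInt_le_stepInt hab.le hg hv (IsStepOn.const hab _)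
    fun t ht => (neg_le_of_abs_le (hf t ht)).trans (hfv t ht)

lemma exists_stepInt_lt_upperRDS_add (hab : a < b) (hf : ∀ t ∈ Icc a b, |f t| ≤ M)
    {ε : ℝ} (hε : 0 < ε) : ∃ (u : ℝ → ℝ) (P : RDSPartition a b), IsStepOn a b u P ∧
      (∀ t ∈ Icc a b, f t ≤ u t) ∧ stepInt a b g P u < upperRDS a b g f + ε := by
  by_contra! H
  have : upperRDS a b g f + ε ≤ upperRDS a b g f :=
    le_csInf ⟨_, fun _ => M, _, IsStepOn.const hab M, fun t ht => (abs_le.1 (hf t ht)).2, rfl⟩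
      fun _ ⟨u, P, hu, hfu, hr⟩ => hr ▸ H u P hu hfu
  linarith

lemma upperRDS_le_mul (hab : a < b) (hg : MonotoneOn g (Icc a b))
    (hf : ∀ t ∈ Icc a b, |f t| ≤ M) : upperRDS a b g f ≤ M * (g b - g a) := by
  rw [← stepInt_endpoints_const hab]
  exact upperRDS_le_stepInt hab hg hf (IsStepOn.const hab M) fun t ht => (abs_le.1 (hf t ht)).2

lemma abs_neg_le_of_abs_le (hf : ∀ t ∈ Icc a b, |f t| ≤ M) : ∀ t ∈ Icc a b, |-f t| ≤ M :=
  fun t ht => (abs_neg (f t)).trans_le (hf t ht)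

lemma stepInt_add_stepInt_nonneg (hab : a ≤ b) (hg : MonotoneOn g (Icc a b))
    (hu : IsStepOn a b u P) (hu' : IsStepOn a b u' Q) (hfu : ∀ t ∈ Icc a b, f t ≤ u t)
    (hfu' : ∀ t ∈ Icc a b, -f t ≤ u' t) : 0 ≤ stepInt a b g P u + stepInt a b g Q u' := by
  have h := stepInt_le_stepInt hab hg hu hu'.neg fun t ht => (neg_le.1 (hfu' t ht)).trans (hfu t ht)
  rw [stepInt_neg] at h
  linarith

lemma oscRDS_nonneg (hab : a < b) (hg : MonotoneOn g (Icc a b))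
    (hf : ∀ t ∈ Icc a b, |f t| ≤ M) : 0 ≤ oscRDS a b g f := by
  rw [oscRDS_eq_upperRDS_add_upperRDS_neg]
  refine le_of_forall_pos_lt_add fun ε hε => ?_
  obtain ⟨u, P, hu, hfu, hlt⟩ := exists_stepInt_lt_upperRDS_add (g := g) hab hf (half_pos hε)
  obtain ⟨u', Q, hu', hfu', hlt'⟩ :=
    exists_stepInt_lt_upperRDS_add (g := g) hab (abs_neg_le_of_abs_le hf) (half_pos hε)
  have := stepInt_add_stepInt_nonneg hab.le hg hu hu' hfu hfu'
  linarith

lemma neg_mul_le_upperRDS (hab : a < b) (hg : MonotoneOn g (Icc a b))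
    (hf : ∀ t ∈ Icc a b, |f t| ≤ M) : -(M * (g b - g a)) ≤ upperRDS a b g f := by
  have h1 := oscRDS_nonneg hab hg hf
  have h2 := upperRDS_le_mul hab hg (abs_neg_le_of_abs_le hf)
  rw [oscRDS_eq_upperRDS_add_upperRDS_neg] at h1
  linarith

lemma abs_upperRDS_le (hab : a < b) (hg : MonotoneOn g (Icc a b))
    (hf : ∀ t ∈ Icc a b, |f t| ≤ M) : |upperRDS a b g f| ≤ M * (g b - g a) :=
  abs_le.2 ⟨neg_mul_le_upperRDS hab hg hf, upperRDS_le_mul hab hg hf⟩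

lemma upperRDS_add_le (hab : a < b) (hg : MonotoneOn g (Icc a b)) (hh : MonotoneOn h (Icc a b))
    (hf : ∀ t ∈ Icc a b, |f t| ≤ M) :
    upperRDS a b (g + h) f ≤ upperRDS a b g f + upperRDS a b h f := by
  refine le_of_forall_pos_lt_add fun ε hε => ?_
  obtain ⟨u, P, hu, hfu, hlt⟩ := exists_stepInt_lt_upperRDS_add (g := g) hab hf (half_pos hε)
  obtain ⟨v, Q, hv, hfv, hlt'⟩ := exists_stepInt_lt_upperRDS_add (g := h) hab hf (half_pos hε)
  obtain ⟨R, hmin⟩ := hu.exists_isStepOn_min hv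
  have h1 := upperRDS_le_stepInt (g := g + h) hab (hg.add hh) hf hmin
    fun t ht => le_min (hfu t ht) (hfv t ht)
  have h2 := stepInt_le_stepInt hab.le hg hu hmin fun t _ => min_le_left _ _
  have h3 := stepInt_le_stepInt hab.le hh hv hmin fun t _ => min_le_right _ _
  rw [stepInt_add_integrator hab.le hg hh hmin] at h1
  linarith

lemma upperRDS_congr {g' : ℝ → ℝ} (hab : a ≤ b) (hg : MonotoneOn g (Icc a b))
    (hg' : MonotoneOn g' (Icc a b)) (hgg' : EqOn g g' (Icc a b)) (f : ℝ → ℝ) :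
    upperRDS a b g f = upperRDS a b g' f := by
  rw [upperRDS, upperRDS]
  congr 1
  ext r
  constructor <;> rintro ⟨u, P, hu, hfu, rfl⟩ <;> refine ⟨u, P, hu, hfu, ?_⟩
  exacts [stepInt_congr_integrator hab hg hg' hgg' hu,
    (stepInt_congr_integrator hab hg hg' hgg' hu).symm]

lemma oscRDS_le_two_mul (hab : a < b) (hg : MonotoneOn g (Icc a b))
    (hf : ∀ t ∈ Icc a b, |f t| ≤ M) : oscRDS a b g f ≤ 2 * M * (g b - g a) := by
  rw [oscRDS_eq_upperRDS_add_upperRDS_neg]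
  linarith [upperRDS_le_mul hab hg hf, upperRDS_le_mul hab hg (abs_neg_le_of_abs_le hf)]

lemma oscRDS_add_le (hab : a < b) (hg : MonotoneOn g (Icc a b)) (hh : MonotoneOn h (Icc a b))
    (hf : ∀ t ∈ Icc a b, |f t| ≤ M) :
    oscRDS a b (g + h) f ≤ oscRDS a b g f + oscRDS a b h f := by
  simp only [oscRDS_eq_upperRDS_add_upperRDS_neg]
  linarith [upperRDS_add_le hab hg hh hf, upperRDS_add_le hab hg hh (abs_neg_le_of_abs_le hf)]

lemma oscRDS_le_oscRDS_add (hab : a < b) (hg : MonotoneOn g (Icc a b))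
    (hh : MonotoneOn h (Icc a b)) (hf : ∀ t ∈ Icc a b, |f t| ≤ M) :
    oscRDS a b g f ≤ oscRDS a b (g + h) f := by
  simp only [oscRDS_eq_upperRDS_add_upperRDS_neg]
  refine le_of_forall_pos_lt_add fun ε hε => ?_
  obtain ⟨u, P, hu, hfu, hlt⟩ :=
    exists_stepInt_lt_upperRDS_add (g := g + h) hab hf (half_pos hε)
  obtain ⟨u', Q, hu', hfu', hlt'⟩ :=
    exists_stepInt_lt_upperRDS_add (g := g + h) hab (abs_neg_le_of_abs_le hf) (half_pos hε)
  have h1 := upperRDS_le_stepInt hab hg hf hu hfu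
  have h2 := upperRDS_le_stepInt hab hg (abs_neg_le_of_abs_le hf) hu' hfu'
  have h3 := stepInt_add_stepInt_nonneg hab.le hh hu hu' hfu hfu'
  rw [stepInt_add_integrator hab.le hg hh hu] at hlt
  rw [stepInt_add_integrator hab.le hg hh hu'] at hlt'
  linarith

lemma oscRDS_mono (hab : a < b) (hg : MonotoneOn g (Icc a b))
    (hhg : MonotoneOn (h - g) (Icc a b)) (hf : ∀ t ∈ Icc a b, |f t| ≤ M) :
    oscRDS a b g f ≤ oscRDS a b h f := by
  simpa only [add_sub_cancel] using oscRDS_le_oscRDS_add hab hg hhg hf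

lemma upperRDS_add (hab : a < b) (hg : MonotoneOn g (Icc a b)) (hh : MonotoneOn h (Icc a b))
    (hf : ∀ t ∈ Icc a b, |f t| ≤ M) (hig : RDSIntegrableInc a b g f)
    (hih : RDSIntegrableInc a b h f) :
    upperRDS a b (g + h) f = upperRDS a b g f + upperRDS a b h f := by
  rw [rdsIntegrableInc_iff_oscRDS_eq_zero, oscRDS_eq_upperRDS_add_upperRDS_neg] at hig hih
  have h1 := upperRDS_add_le hab hg hh (abs_neg_le_of_abs_le hf)
  have h2 := oscRDS_nonneg (g := g + h) hab (hg.add hh) hf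
  rw [oscRDS_eq_upperRDS_add_upperRDS_neg] at h2
  linarith [upperRDS_add_le hab hg hh hf]

end Envelopes

section Variation

variable {α E : Type*} [LinearOrder α]

lemma eVariationOn_sub_le [SeminormedAddCommGroup E] (f g : α → E) (s : Set α) :
    eVariationOn (f - g) s ≤ eVariationOn f s + eVariationOn g s := by
  refine iSup_le fun ⟨n, u, hu, us⟩ => ?_
  calc ∑ i ∈ Finset.range n, edist ((f - g) (u (i + 1))) ((f - g) (u i))
      ≤ ∑ i ∈ Finset.range n,
          (edist (f (u (i + 1))) (f (u i)) + edist (g (u (i + 1))) (g (u i))) :=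
        Finset.sum_le_sum fun i _ => by
          rw [Pi.sub_apply, Pi.sub_apply, edist_dist, edist_dist, edist_dist,
            ← ENNReal.ofReal_add dist_nonneg dist_nonneg]
          exact ENNReal.ofReal_le_ofReal (dist_sub_sub_le _ _ _ _)
    _ = _ := Finset.sum_add_distrib
    _ ≤ _ := add_le_add (eVariationOn.sum_le (f := f) hu us) (eVariationOn.sum_le (f := g) hu us)

lemma BoundedVariationOn.sub [SeminormedAddCommGroup E] {f g : α → E} {s : Set α}
    (hf : BoundedVariationOn f s) (hg : BoundedVariationOn g s) :
    BoundedVariationOn (f - g) s :=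
  ((eVariationOn_sub_le f g s).trans_lt
    (ENNReal.add_lt_top.2 ⟨lt_top_iff_ne_top.2 hf, lt_top_iff_ne_top.2 hg⟩)).ne

variable {s : Set α} {β P Q : α → ℝ}

lemma variationOnFromTo_le_of_eqOn_sub (hP : MonotoneOn P s) (hQ : MonotoneOn Q s)
    (hβ : EqOn β (P - Q) s) {x y : α} (hx : x ∈ s) (hy : y ∈ s) (hxy : x ≤ y) :
    variationOnFromTo β s x y ≤ (P y - P x) + (Q y - Q x) := by
  have hPxy := sub_nonneg.2 (hP hx hy hxy)
  have hQxy := sub_nonneg.2 (hQ hx hy hxy)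
  rw [variationOnFromTo.eq_of_le _ _ hxy, eVariationOn.eq_of_eqOn (hβ.mono inter_subset_left)]
  refine ENNReal.toReal_le_of_le_ofReal (add_nonneg hPxy hQxy) ?_
  rw [ENNReal.ofReal_add hPxy hQxy, ← hP.eVariationOn_eq hx hy, ← hQ.eVariationOn_eq hx hy]
  exact eVariationOn_sub_le P Q _

lemma monotoneOn_add_sub_variationOnFromTo (hP : MonotoneOn P s) (hQ : MonotoneOn Q s)
    (hβ : EqOn β (P - Q) s) (hβv : LocallyBoundedVariationOn β s) {c : α} (hc : c ∈ s) :
    MonotoneOn (P + Q - variationOnFromTo β s c) s := by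
  intro x hx y hy hxy
  have h1 := variationOnFromTo.add hβv hc hx hy
  have h2 := variationOnFromTo_le_of_eqOn_sub hP hQ hβ hx hy hxy
  simp only [Pi.add_apply, Pi.sub_apply]
  linarith

lemma monotoneOn_add_sub_variationOnFromTo_sub (hP : MonotoneOn P s) (hQ : MonotoneOn Q s)
    (hβ : EqOn β (P - Q) s) (hβv : LocallyBoundedVariationOn β s) {c : α} (hc : c ∈ s) :
    MonotoneOn (Q + Q - (variationOnFromTo β s c - β)) s := by
  intro x hx y hy hxy
  have h1 := variationOnFromTo.add hβv hc hx hy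
  have h2 := variationOnFromTo_le_of_eqOn_sub hP hQ hβ hx hy hxy
  have hβx := hβ hx
  have hβy := hβ hy
  simp only [Pi.add_apply, Pi.sub_apply] at hβx hβy ⊢
  linarith

end Variation

section BVIntegrators

variable {a b M : ℝ} {f g h β γ P Q : ℝ → ℝ}

lemma variationOnFromTo_Icc_left_right (hab : a ≤ b) :
    variationOnFromTo β (Icc a b) a b = (eVariationOn β (Icc a b)).toReal := by
  rw [variationOnFromTo.eq_of_le _ _ hab, inter_self]

lemma oscRDS_variationOnFromTo_le (hab : a < b) (hf : ∀ t ∈ Icc a b, |f t| ≤ M)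
    (hP : MonotoneOn P (Icc a b)) (hQ : MonotoneOn Q (Icc a b)) (hβ : EqOn β (P - Q) (Icc a b))
    (hβv : BoundedVariationOn β (Icc a b)) :
    oscRDS a b (variationOnFromTo β (Icc a b) a) f ≤ oscRDS a b P f + oscRDS a b Q f :=
  have ha : a ∈ Icc a b := left_mem_Icc.2 hab.le
  (oscRDS_mono hab (variationOnFromTo.monotoneOn hβv.locallyBoundedVariationOn ha)
    (monotoneOn_add_sub_variationOnFromTo hP hQ hβ hβv.locallyBoundedVariationOn ha) hf).trans
    (oscRDS_add_le hab hP hQ hf)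

lemma oscRDS_variationOnFromTo_sub_le (hab : a < b) (hf : ∀ t ∈ Icc a b, |f t| ≤ M)
    (hP : MonotoneOn P (Icc a b)) (hQ : MonotoneOn Q (Icc a b)) (hβ : EqOn β (P - Q) (Icc a b))
    (hβv : BoundedVariationOn β (Icc a b)) :
    oscRDS a b (variationOnFromTo β (Icc a b) a - β) f ≤ 2 * oscRDS a b Q f :=
  have ha : a ∈ Icc a b := left_mem_Icc.2 hab.le
  (oscRDS_mono hab (variationOnFromTo.sub_self_monotoneOn hβv.locallyBoundedVariationOn ha)
    (monotoneOn_add_sub_variationOnFromTo_sub hP hQ hβ hβv.locallyBoundedVariationOn ha) hf).trans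
    ((oscRDS_add_le hab hQ hQ hf).trans_eq (two_mul _).symm)

theorem rdsIntegrable_iff (hab : a < b) (hf : ∀ t ∈ Icc a b, |f t| ≤ M)
    (hβ : BoundedVariationOn β (Icc a b)) :
    RDSIntegrable a b β f ↔ RDSIntegrableInc a b (variationOnFromTo β (Icc a b) a) f ∧
      RDSIntegrableInc a b (variationOnFromTo β (Icc a b) a - β) f := by
  have ha : a ∈ Icc a b := left_mem_Icc.2 hab.le
  have hv := variationOnFromTo.monotoneOn hβ.locallyBoundedVariationOn ha
  have hvβ := variationOnFromTo.sub_self_monotoneOn hβ.locallyBoundedVariationOn ha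
  refine ⟨fun ⟨P, Q, hP, hQ, hPQ, hiP, hiQ⟩ => ?_,
    fun h => ⟨_, _, hv, hvβ, fun t _ => by simp, h.1, h.2⟩⟩
  simp only [rdsIntegrableInc_iff_oscRDS_eq_zero] at hiP hiQ ⊢
  have h1 := oscRDS_variationOnFromTo_le hab hf hP hQ hPQ hβ
  have h2 := oscRDS_variationOnFromTo_sub_le hab hf hP hQ hPQ hβ
  have h3 := oscRDS_nonneg hab hv hf
  have h4 := oscRDS_nonneg hab hvβ hf
  constructor <;> linarith

lemma rdsIntegral_eq_upperRDS_sub (hab : a < b) (hf : ∀ t ∈ Icc a b, |f t| ≤ M)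
    (hP : MonotoneOn P (Icc a b)) (hQ : MonotoneOn Q (Icc a b))
    (hβ : ∀ t ∈ Icc a b, β t = P t - Q t) (hiP : RDSIntegrableInc a b P f)
    (hiQ : RDSIntegrableInc a b Q f) :
    RDSIntegral a b β f = upperRDS a b P f - upperRDS a b Q f := by
  have hint : RDSIntegrable a b β f := ⟨P, Q, hP, hQ, hβ, hiP, hiQ⟩
  obtain ⟨hP', hQ', hβ', hiP', hiQ'⟩ := hint.choose_spec.choose_spec
  rw [RDSIntegral, dif_pos hint, RDSIntegralInc, RDSIntegralInc]
  set P' := hint.choose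
  set Q' := hint.choose_spec.choose
  have h1 := upperRDS_add hab hP' hQ hf hiP' hiQ
  have h2 := upperRDS_add hab hP hQ' hf hiP hiQ'
  have h3 := upperRDS_congr (g := P' + Q) (g' := P + Q') hab.le (hP'.add hQ) (hP.add hQ')
    (fun t ht => by simp only [Pi.add_apply]; linarith [hβ t ht, hβ' t ht]) f
  linarith

lemma rdsIntegrableInc_add (hab : a < b) (hf : ∀ t ∈ Icc a b, |f t| ≤ M)
    (hg : MonotoneOn g (Icc a b)) (hh : MonotoneOn h (Icc a b)) (hig : RDSIntegrableInc a b g f)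
    (hih : RDSIntegrableInc a b h f) : RDSIntegrableInc a b (g + h) f := by
  rw [rdsIntegrableInc_iff_oscRDS_eq_zero] at hig hih ⊢
  linarith [oscRDS_add_le hab hg hh hf, oscRDS_nonneg (g := g + h) hab (hg.add hh) hf]

lemma RDSIntegrable.sub (hab : a < b) (hf : ∀ t ∈ Icc a b, |f t| ≤ M)
    (hβ : RDSIntegrable a b β f) (hγ : RDSIntegrable a b γ f) : RDSIntegrable a b (β - γ) f := by
  obtain ⟨P₁, Q₁, hP₁, hQ₁, hβ, hiP₁, hiQ₁⟩ := hβ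
  obtain ⟨P₂, Q₂, hP₂, hQ₂, hγ, hiP₂, hiQ₂⟩ := hγ
  refine ⟨P₁ + Q₂, Q₁ + P₂, hP₁.add hQ₂, hQ₁.add hP₂, fun t ht => ?_,
    rdsIntegrableInc_add hab hf hP₁ hQ₂ hiP₁ hiQ₂, rdsIntegrableInc_add hab hf hQ₁ hP₂ hiQ₁ hiP₂⟩
  simp only [Pi.add_apply, Pi.sub_apply, hβ t ht, hγ t ht]
  ring

lemma rdsIntegral_sub (hab : a < b) (hf : ∀ t ∈ Icc a b, |f t| ≤ M)
    (hβ : RDSIntegrable a b β f) (hγ : RDSIntegrable a b γ f) :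
    RDSIntegral a b (β - γ) f = RDSIntegral a b β f - RDSIntegral a b γ f := by
  obtain ⟨P₁, Q₁, hP₁, hQ₁, hβ, hiP₁, hiQ₁⟩ := hβ
  obtain ⟨P₂, Q₂, hP₂, hQ₂, hγ, hiP₂, hiQ₂⟩ := hγ
  rw [rdsIntegral_eq_upperRDS_sub hab hf hP₁ hQ₁ hβ hiP₁ hiQ₁,
    rdsIntegral_eq_upperRDS_sub hab hf hP₂ hQ₂ hγ hiP₂ hiQ₂,
    rdsIntegral_eq_upperRDS_sub (P := P₁ + Q₂) (Q := Q₁ + P₂) hab hf (hP₁.add hQ₂) (hQ₁.add hP₂)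
      (fun t ht => by simp only [Pi.add_apply, Pi.sub_apply, hβ t ht, hγ t ht]; ring)
      (rdsIntegrableInc_add hab hf hP₁ hQ₂ hiP₁ hiQ₂)
      (rdsIntegrableInc_add hab hf hQ₁ hP₂ hiQ₁ hiP₂),
    upperRDS_add hab hP₁ hQ₂ hf hiP₁ hiQ₂, upperRDS_add hab hQ₁ hP₂ hf hiQ₁ hiP₂]
  ring

-- The constant `3` (not optimal) comes from the decomposition `β = vβ - (vβ - β)`.
lemma abs_rdsIntegral_le (hab : a < b) (hf : ∀ t ∈ Icc a b, |f t| ≤ M)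
    (hβ : BoundedVariationOn β (Icc a b)) (hi : RDSIntegrable a b β f) :
    |RDSIntegral a b β f| ≤ 3 * M * (eVariationOn β (Icc a b)).toReal := by
  have ha : a ∈ Icc a b := left_mem_Icc.2 hab.le
  have hb : b ∈ Icc a b := right_mem_Icc.2 hab.le
  have hM : 0 ≤ M := (abs_nonneg _).trans (hf a ha)
  have hv := variationOnFromTo.monotoneOn hβ.locallyBoundedVariationOn ha
  have hvβ := variationOnFromTo.sub_self_monotoneOn hβ.locallyBoundedVariationOn ha
  obtain ⟨hiv, hivβ⟩ := (rdsIntegrable_iff hab hf hβ).1 hi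
  rw [rdsIntegral_eq_upperRDS_sub hab hf hv hvβ (fun t _ => by simp) hiv hivβ]
  have h1 := abs_upperRDS_le hab hv hf
  have h2 := abs_upperRDS_le hab hvβ hf
  have h3 := hβ.sub_le ha hb
  simp only [Pi.sub_apply, variationOnFromTo.self, variationOnFromTo_Icc_left_right hab.le]
    at h1 h2
  calc _ ≤ _ := abs_sub _ _
    _ ≤ _ := add_le_add h1 h2
    _ ≤ _ := by nlinarith

/-- With `δ = A - β` and a good decomposition `A = p - m`, one has
`β = (p + (vδ - δ)) - (m + vδ)`, where the added terms have oscillation `O(M · Vδ)`. -/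
lemma oscRDS_variationOnFromTo_le_of_rdsIntegrable {A : ℝ → ℝ} (hab : a < b)
    (hf : ∀ t ∈ Icc a b, |f t| ≤ M) (hβ : BoundedVariationOn β (Icc a b))
    (hA : RDSIntegrable a b A f) (hAβ : BoundedVariationOn (A - β) (Icc a b)) :
    oscRDS a b (variationOnFromTo β (Icc a b) a) f ≤
        6 * M * (eVariationOn (A - β) (Icc a b)).toReal ∧
      oscRDS a b (variationOnFromTo β (Icc a b) a - β) f ≤
        4 * M * (eVariationOn (A - β) (Icc a b)).toReal := by
  obtain ⟨p, m, hp, hm, hApm, hip, him⟩ := hA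
  rw [rdsIntegrableInc_iff_oscRDS_eq_zero] at hip him
  have ha : a ∈ Icc a b := left_mem_Icc.2 hab.le
  have hb : b ∈ Icc a b := right_mem_Icc.2 hab.le
  have hM : 0 ≤ M := (abs_nonneg _).trans (hf a ha)
  set δ := A - β
  set w := variationOnFromTo δ (Icc a b) a
  have hw : MonotoneOn w (Icc a b) := variationOnFromTo.monotoneOn hAβ.locallyBoundedVariationOn ha
  have hwδ : MonotoneOn (w - δ) (Icc a b) :=
    variationOnFromTo.sub_self_monotoneOn hAβ.locallyBoundedVariationOn ha
  have hβPQ : EqOn β (p + (w - δ) - (m + w)) (Icc a b) := fun t ht => by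
    simp only [δ, Pi.add_apply, Pi.sub_apply, hApm t ht]
    ring
  have hoscP := oscRDS_add_le hab hp hwδ hf
  have hoscQ := oscRDS_add_le hab hm hw hf
  have hoscw := oscRDS_le_two_mul hab hw hf
  have hoscwδ := oscRDS_le_two_mul hab hwδ hf
  have hδab := hAβ.sub_le ha hb
  have hwa : w a = 0 := variationOnFromTo.self _ _ _
  have hwb : w b = (eVariationOn δ (Icc a b)).toReal := variationOnFromTo_Icc_left_right hab.le
  rw [Pi.sub_apply, Pi.sub_apply, hwa, hwb] at hoscwδ
  rw [hwa, hwb] at hoscw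
  have h1 := oscRDS_variationOnFromTo_le (P := p + (w - δ)) (Q := m + w) hab hf (hp.add hwδ)
    (hm.add hw) hβPQ hβ
  have h2 := oscRDS_variationOnFromTo_sub_le (P := p + (w - δ)) (Q := m + w) hab hf (hp.add hwδ)
    (hm.add hw) hβPQ hβ
  constructor <;> nlinarith

theorem RDSIntegrable.of_tendsto_eVariationOn {ι : Type*} {l : Filter ι} [l.NeBot]
    {A : ι → ℝ → ℝ} (hab : a < b) (hf : ∀ t ∈ Icc a b, |f t| ≤ M)
    (hβ : BoundedVariationOn β (Icc a b)) (hAβ : ∀ i, BoundedVariationOn (A i - β) (Icc a b))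
    (hA : ∀ i, RDSIntegrable a b (A i) f)
    (hV : Tendsto (fun i => (eVariationOn (A i - β) (Icc a b)).toReal) l (𝓝 0)) :
    RDSIntegrable a b β f := by
  have hv := variationOnFromTo.monotoneOn hβ.locallyBoundedVariationOn (left_mem_Icc.2 hab.le)
  have hvβ := variationOnFromTo.sub_self_monotoneOn hβ.locallyBoundedVariationOn
    (left_mem_Icc.2 hab.le)
  have hbound i := oscRDS_variationOnFromTo_le_of_rdsIntegrable hab hf hβ (hA i) (hAβ i)
  simp only [rdsIntegrable_iff hab hf hβ, rdsIntegrableInc_iff_oscRDS_eq_zero]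
  have h6 : Tendsto (fun i => 6 * M * (eVariationOn (A i - β) (Icc a b)).toReal) l (𝓝 0) := by
    simpa using hV.const_mul (6 * M)
  have h4 : Tendsto (fun i => 4 * M * (eVariationOn (A i - β) (Icc a b)).toReal) l (𝓝 0) := by
    simpa using hV.const_mul (4 * M)
  exact ⟨le_antisymm (ge_of_tendsto' h6 fun i => (hbound i).1) (oscRDS_nonneg hab hv hf),
    le_antisymm (ge_of_tendsto' h4 fun i => (hbound i).2) (oscRDS_nonneg hab hvβ hf)⟩

theorem tendsto_rdsIntegral_of_tendsto_eVariationOn {ι : Type*} {l : Filter ι} [l.NeBot]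
    {A : ι → ℝ → ℝ} (hab : a < b) (hf : ∀ t ∈ Icc a b, |f t| ≤ M)
    (hβ : BoundedVariationOn β (Icc a b)) (hAβ : ∀ i, BoundedVariationOn (A i - β) (Icc a b))
    (hA : ∀ i, RDSIntegrable a b (A i) f)
    (hV : Tendsto (fun i => (eVariationOn (A i - β) (Icc a b)).toReal) l (𝓝 0)) :
    Tendsto (fun i => RDSIntegral a b (A i) f) l (𝓝 (RDSIntegral a b β f)) := by
  have hiβ := RDSIntegrable.of_tendsto_eVariationOn hab hf hβ hAβ hA hV
  rw [← tendsto_sub_nhds_zero_iff]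
  refine squeeze_zero_norm (fun i => ?_) (by simpa using hV.const_mul (3 * M))
  rw [Real.norm_eq_abs, ← rdsIntegral_sub hab hf (hA i) hiβ]
  exact abs_rdsIntegral_le hab hf (hAβ i) ((hA i).sub hab hf hiβ)

end BVIntegrators

lemma toReal_eVariationOn_le_BVnorm (a b : ℝ) (β : ℝ → ℝ) :
    (eVariationOn β (Icc a b)).toReal ≤ BVnorm a b β :=
  le_add_of_nonneg_left (Real.sSup_nonneg (by rintro _ ⟨t, _, rfl⟩; exact abs_nonneg _))

end

theorem stmt14 (a b : ℝ) (hab : a < b) (A : ℕ → ℝ → ℝ) (α f : ℝ → ℝ)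
    (hA : ∀ k, BoundedVariationOn (A k) (Set.Icc a b))
    (hα : BoundedVariationOn α (Set.Icc a b))
    (hconv : Tendsto (fun k => BVnorm a b (fun t => A k t - α t)) atTop (𝓝 0))
    (hf : BddOn a b f) (hfi : ∀ k, RDSIntegrable a b (A k) f) :
    RDSIntegrable a b α f ∧
    Tendsto (fun k => RDSIntegral a b (A k) f) atTop (𝓝 (RDSIntegral a b α f)) := by
  obtain ⟨M, hM⟩ := hf
  have hAα k : BoundedVariationOn (A k - α) (Icc a b) := (hA k).sub hα
  have hV : Tendsto (fun k => (eVariationOn (A k - α) (Icc a b)).toReal) atTop (𝓝 0) :=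
    squeeze_zero (fun _ => ENNReal.toReal_nonneg)
      (fun k => toReal_eVariationOn_le_BVnorm a b (A k - α)) hconv
  exact ⟨.of_tendsto_eVariationOn hab hM hα hAα hfi hV,
    tendsto_rdsIntegral_of_tendsto_eVariationOn hab hM hα hAα hfi hV⟩
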